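/- arXiv:math/0312424 — 2 statements merged into one kernel-verified Lean document; each statement's English description precedes it below -/
import Mathlib

section
/- The number of labelled oriented-edge-rooted k-gonal 2-trees with n polygons is ((k-1)n+1)^{n-1}. -/
namespace KGonal2Trees

/-- Vertex set of the canonical model: the two endpoints of the root edge,
plus `k - 2` new vertices for each of the `n` polygons. -/
abbrev V (k n : ℕ) : Type := Fin 2 ⊕ (Fin n × Fin (k - 2))

/-- A code describes, for each polygon (labelled by `Fin n`), the edge to which it is glued:
`none` means the (oriented) root edge, and `some (i, t)` means the `t`-th side edge of
polygon `i`. -/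
abbrev Code (k n : ℕ) : Type := Fin n → Option (Fin n × Fin (k - 1))

/-- Tree-likeness: the "parent polygon" relation admits a height function,
i.e. it has no cycles. -/
def Acyclic {k n : ℕ} (f : Code k n) : Prop :=
  ∃ h : Fin n → ℕ, ∀ (j i : Fin n) (t : Fin (k - 1)), f j = some (i, t) → h i < h j

/-- The `s`-th vertex (`0 ≤ s ≤ k-1`) along the non-attached part of the cycle of polygon `j`,
when the attaching (oriented) edge of `j` is `(a, b)`:  `u_0 = b`,
`u_s = (j, s-1)` for `1 ≤ s ≤ k-2`, and `u_{k-1} = a`. -/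
def pvert (k n : ℕ) (a b : V k n) (j : Fin n) (s : ℕ) : V k n :=
  if h : 1 ≤ s ∧ s ≤ k - 2 then Sum.inr (j, ⟨s - 1, by omega⟩)
  else if s = 0 then b else a

/-- The oriented attaching edge of polygon `j` (computed with fuel; fuel `n + 1` suffices
for acyclic codes). -/
def anchor (k n : ℕ) : ℕ → Code k n → Fin n → V k n × V k n
  | 0, _, _ => (Sum.inl 0, Sum.inl 1)
  | fuel + 1, f, j =>
    match f j with
    | none => (Sum.inl 0, Sum.inl 1)
    | some (i, t) =>
      let p := anchor k n fuel f i
      (pvert k n p.1 p.2 i (t : ℕ), pvert k n p.1 p.2 i ((t : ℕ) + 1))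

/-- The `s`-th vertex (`0 ≤ s ≤ k-1`) of the oriented cycle of polygon `j`. -/
def cyc (k n : ℕ) (f : Code k n) (j : Fin n) (s : ℕ) : V k n :=
  if s = 0 then (anchor k n (n + 1) f j).1
  else pvert k n (anchor k n (n + 1) f j).1 (anchor k n (n + 1) f j).2 j (s - 1)

/-- The set of oriented edges of polygon `j` (the oriented `k`-cycle). -/
def polyO (k n : ℕ) (f : Code k n) (j : Fin n) : Finset (V k n × V k n) :=
  Finset.image (fun s : Fin k => (cyc k n f j (s : ℕ), cyc k n f j (((s : ℕ) + 1) % k)))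
    Finset.univ

/-- The set of unoriented edges of polygon `j`. -/
def polyU (k n : ℕ) (f : Code k n) (j : Fin n) : Finset (Sym2 (V k n)) :=
  Finset.image
    (fun s : Fin k => s(cyc k n f j (s : ℕ), cyc k n f j (((s : ℕ) + 1) % k)))
    Finset.univ

/-- Codes of labelled oriented-edge-rooted `k`-gonal 2-trees on `n` polygons. -/
abbrev Enc (k n : ℕ) : Type := {f : Code k n // Acyclic f}

/-- Isomorphism of labelled oriented-edge-rooted structures: a bijection of vertices fixing the
oriented root edge and sending each polygon (with its orientation and label) to itself. -/
def RelRootLab (k n : ℕ) (f g : Enc k n) : Prop :=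
  ∃ φ : V k n ≃ V k n,
    φ (Sum.inl 0) = Sum.inl 0 ∧ φ (Sum.inl 1) = Sum.inl 1 ∧
    ∀ j, polyO k n g.1 j = (polyO k n f.1 j).image (Prod.map ⇑φ ⇑φ)

/-- Isomorphism of labelled oriented (unrooted) structures. -/
def RelOriLab (k n : ℕ) (f g : Enc k n) : Prop :=
  ∃ φ : V k n ≃ V k n, ∀ j, polyO k n g.1 j = (polyO k n f.1 j).image (Prod.map ⇑φ ⇑φ)

/-- Isomorphism of labelled unoriented (unrooted) structures. -/
def RelUnLab (k n : ℕ) (f g : Enc k n) : Prop :=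
  ∃ φ : V k n ≃ V k n, ∀ j, polyU k n g.1 j = (polyU k n f.1 j).image (Sym2.map ⇑φ)

/-- Isomorphism of unlabelled oriented (unrooted) structures. -/
def RelOri (k n : ℕ) (f g : Enc k n) : Prop :=
  ∃ (φ : V k n ≃ V k n) (σ : Fin n ≃ Fin n),
    ∀ j, polyO k n g.1 (σ j) = (polyO k n f.1 j).image (Prod.map ⇑φ ⇑φ)

/-- Isomorphism of unlabelled unoriented (unrooted) structures. -/
def RelUn (k n : ℕ) (f g : Enc k n) : Prop :=
  ∃ (φ : V k n ≃ V k n) (σ : Fin n ≃ Fin n),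
    ∀ j, polyU k n g.1 (σ j) = (polyU k n f.1 j).image (Sym2.map ⇑φ)

/-- Isomorphism of unlabelled oriented-edge-rooted structures. -/
def RelRoot (k n : ℕ) (f g : Enc k n) : Prop :=
  ∃ (φ : V k n ≃ V k n) (σ : Fin n ≃ Fin n),
    φ (Sum.inl 0) = Sum.inl 0 ∧ φ (Sum.inl 1) = Sum.inl 1 ∧
    ∀ j, polyO k n g.1 (σ j) = (polyO k n f.1 j).image (Prod.map ⇑φ ⇑φ)

/-- Isomorphism of unlabelled edge-rooted unoriented structures: the root edge is preserved
as an unoriented edge. -/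
def RelRootUn (k n : ℕ) (f g : Enc k n) : Prop :=
  ∃ (φ : V k n ≃ V k n) (σ : Fin n ≃ Fin n),
    Sym2.map ⇑φ s(Sum.inl 0, Sum.inl 1) =
      s((Sum.inl (0 : Fin 2) : V k n), Sum.inl 1) ∧
    ∀ j, polyU k n g.1 (σ j) = (polyU k n f.1 j).image (Sym2.map ⇑φ)

/-- An oriented-edge-rooted structure is fixed by orientation reversal `τ` if it is isomorphic
(as an unlabelled rooted structure) to the structure obtained by reversing all edge
orientations (in particular that of the root edge). -/
def FixedRev (k n : ℕ) (f : Enc k n) : Prop :=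
  ∃ (φ : V k n ≃ V k n) (σ : Fin n ≃ Fin n),
    φ (Sum.inl 0) = Sum.inl 1 ∧ φ (Sum.inl 1) = Sum.inl 0 ∧
    ∀ j, polyO k n f.1 (σ j) = ((polyO k n f.1 j).image (Prod.map ⇑φ ⇑φ)).image Prod.swap

/-- Number of labelled oriented-edge-rooted `k`-gonal 2-trees with `n` polygons. -/
noncomputable def aRootLab (k n : ℕ) : ℕ := Nat.card (Quot (RelRootLab k n))

/-- Number of labelled oriented `k`-gonal 2-trees with `n` polygons. -/
noncomputable def aOriLab (k n : ℕ) : ℕ := Nat.card (Quot (RelOriLab k n))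

/-- Number of labelled (unoriented) `k`-gonal 2-trees with `n` polygons. -/
noncomputable def aUnLab (k n : ℕ) : ℕ := Nat.card (Quot (RelUnLab k n))

/-- Number of unlabelled oriented `k`-gonal 2-trees with `n` polygons. -/
noncomputable def aOri (k n : ℕ) : ℕ := Nat.card (Quot (RelOri k n))

/-- Number of unlabelled (unoriented) `k`-gonal 2-trees with `n` polygons. -/
noncomputable def aUn (k n : ℕ) : ℕ := Nat.card (Quot (RelUn k n))

/-- Number of unlabelled oriented-edge-rooted `k`-gonal 2-trees with `n` polygons. -/
noncomputable def bRoot (k n : ℕ) : ℕ := Nat.card (Quot (RelRoot k n))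

/-- Number of unlabelled oriented-edge-rooted structures fixed by orientation reversal. -/
noncomputable def bRootFix (k n : ℕ) : ℕ :=
  Nat.card {c : Quot (RelRoot k n) // ∃ f, Quot.mk (RelRoot k n) f = c ∧ FixedRev k n f}

/-- Number of unlabelled edge-rooted (unoriented) `k`-gonal 2-trees with `n` polygons. -/
noncomputable def aRootUn (k n : ℕ) : ℕ := Nat.card (Quot (RelRootUn k n))

/-!
A code is a map `f : Fin n → Option (Fin n × Fin (k - 1))` naming, for each polygon, the side it is
glued to (`none` is the root edge). The model is rigid: a labelled isomorphism fixing the oriented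
root edge fixes every polygon pointwise, by induction on the depth, so `aRootLab k n` counts the
acyclic codes, i.e. rooted forests on `n` vertices whose edges carry one of `c = k - 1` colours.

These are counted as in Joyal's proof of Cayley's formula. An arbitrary map
`g : α → Option (α × C)` is a coloured permutation of its cyclic vertices `S` with a forest hanging
off `S`; listing `S` in a fixed order turns the permutation into a coloured path through `S`, which
together with the same forest is a rooted forest plus a marked link `Option (α × C)` entering the
path. Hence `(c n + 1) ^ n = #forests * (c n + 1)`.
-/

open Function

section RootedForest

variable {α C : Type*}

/-- `f a = some (b, t)` makes `b` the parent of `a`, via an edge of colour `t`; `none` is the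
root. -/
def parentMap (f : α → Option (α × C)) : Option α → Option α :=
  fun o => o.bind fun a => (f a).map Prod.fst

@[simp] lemma parentMap_none (f : α → Option (α × C)) : parentMap f none = none := rfl

@[simp] lemma parentMap_some (f : α → Option (α × C)) (a : α) :
    parentMap f (some a) = (f a).map Prod.fst := rfl

lemma iterate_parentMap_none (f : α → Option (α × C)) (r : ℕ) :
    (parentMap f)^[r] none = none :=
  iterate_fixed rfl r

lemma iterate_parentMap_eq_none_of_le {f : α → Option (α × C)} {o : Option α} {r s : ℕ}
    (h : (parentMap f)^[r] o = none) (hrs : r ≤ s) : (parentMap f)^[s] o = none := by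
  obtain ⟨t, rfl⟩ := Nat.exists_eq_add_of_le hrs
  rw [Nat.add_comm, iterate_add_apply, h, iterate_parentMap_none]

lemma eq_none_of_isPeriodicPt {f : α → Option (α × C)} {o : Option α} {n m : ℕ} (hn : 0 < n)
    (hp : IsPeriodicPt (parentMap f) n o) (h : (parentMap f)^[m] o = none) : o = none := by
  rw [← (hp.mul_const m).eq]
  exact iterate_parentMap_eq_none_of_le h (Nat.le_mul_of_pos_left m hn)

def IsRootedForest (f : α → Option (α × C)) : Prop :=
  ∀ a, ∃ r, (parentMap f)^[r] (some a) = none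

lemma IsRootedForest.exists_iterate_eq_none {f : α → Option (α × C)} (hf : IsRootedForest f)
    (o : Option α) : ∃ r, (parentMap f)^[r] o = none := by
  cases o with
  | none => exact ⟨0, rfl⟩
  | some a => exact hf a

noncomputable def depth (f : α → Option (α × C)) (o : Option α) : ℕ :=
  sInf {r | (parentMap f)^[r] o = none}

variable {f : α → Option (α × C)}

lemma iterate_eq_none_iff_depth_le (hf : IsRootedForest f) {o : Option α} {r : ℕ} :
    (parentMap f)^[r] o = none ↔ depth f o ≤ r :=
  ⟨fun h => Nat.sInf_le h,
    iterate_parentMap_eq_none_of_le (Nat.sInf_mem (hf.exists_iterate_eq_none o))⟩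

lemma depth_parentMap (hf : IsRootedForest f) (o : Option α) :
    depth f (parentMap f o) = depth f o - 1 := by
  refine eq_of_forall_ge_iff fun r => ?_
  rw [← iterate_eq_none_iff_depth_le hf, ← iterate_succ_apply, iterate_eq_none_iff_depth_le hf]
  omega

lemma depth_some_pos (hf : IsRootedForest f) (a : α) : 0 < depth f (some a) := by
  by_contra h
  simpa using (iterate_eq_none_iff_depth_le hf (o := some a) (r := 0)).2 (by omega)

lemma depth_lt_of_eq_some (hf : IsRootedForest f) {a b : α} {t : C} (h : f a = some (b, t)) :
    depth f (some b) < depth f (some a) := by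
  have hb := depth_parentMap hf (some a)
  simp only [parentMap_some, h, Option.map_some] at hb
  have := depth_some_pos hf a
  omega

lemma iterate_injOn_Iic_depth (hf : IsRootedForest f) (o : Option α) :
    Set.InjOn (fun r => (parentMap f)^[r] o) (Set.Iic (depth f o)) := by
  suffices ∀ a b, a < b → b ≤ depth f o → (parentMap f)^[a] o ≠ (parentMap f)^[b] o by
    intro a ha b hb hab
    by_contra hne
    rcases Nat.lt_or_gt_of_ne hne with h | h
    exacts [this a b h hb hab, this b a h ha hab.symm]
  intro a b hab hb heq
  have hper : IsPeriodicPt (parentMap f) (b - a) ((parentMap f)^[a] o) := by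
    rw [IsPeriodicPt, IsFixedPt, ← iterate_add_apply, Nat.sub_add_cancel hab.le, heq]
  obtain ⟨m, hm⟩ := hf.exists_iterate_eq_none ((parentMap f)^[a] o)
  have := (iterate_eq_none_iff_depth_le hf).1 (eq_none_of_isPeriodicPt (by omega) hper hm)
  omega

lemma depth_le_card [Fintype α] (hf : IsRootedForest f) (o : Option α) :
    depth f o ≤ Fintype.card α := by
  have hinj : Injective fun r : Fin (depth f o + 1) => (parentMap f)^[r] o :=
    fun a b h => Fin.ext (iterate_injOn_Iic_depth hf o (Nat.lt_succ_iff.1 a.2)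
      (Nat.lt_succ_iff.1 b.2) h)
  simpa using Fintype.card_le_of_injective _ hinj

end RootedForest

lemma exists_iterate_mem_periodicPts {β : Type*} [Finite β] (g : β → β) (x : β) :
    ∃ m, g^[m] x ∈ periodicPts g := by
  obtain ⟨a, b, hne, heq⟩ := Finite.exists_ne_map_eq_of_infinite fun m : ℕ => g^[m] x
  wlog hab : a < b generalizing a b
  · exact this b a hne.symm heq.symm (by omega)
  refine ⟨a, mk_mem_periodicPts (Nat.sub_pos_of_lt hab) ?_⟩
  rw [IsPeriodicPt, IsFixedPt, ← iterate_add_apply, Nat.sub_add_cancel hab.le]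
  exact heq.symm

section CutGlue

variable {α C : Type*} [DecidableEq α]

def cutAt (S : Finset α) (g : α → Option (α × C)) : α → Option (α × C) :=
  fun a => if a ∈ S then none else g a

def glue (S : Finset α) (p : S → Option (α × C)) (h : α → Option (α × C)) :
    α → Option (α × C) :=
  fun a => if ha : a ∈ S then p ⟨a, ha⟩ else h a

lemma glue_apply_coe (S : Finset α) (p : S → Option (α × C)) (h : α → Option (α × C)) (a : S) :
    glue S p h a = p a :=
  dif_pos a.2

lemma cutAt_glue {S : Finset α} (p : S → Option (α × C)) {h : α → Option (α × C)}
    (hS : ∀ a ∈ S, h a = none) : cutAt S (glue S p h) = h := by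
  funext a
  by_cases ha : a ∈ S
  · simp [cutAt, ha, hS a ha]
  · simp [cutAt, glue, ha]

lemma glue_cutAt {S : Finset α} {p : S → Option (α × C)} {g : α → Option (α × C)}
    (hp : ∀ a : S, p a = g a) : glue S p (cutAt S g) = g := by
  funext a
  by_cases ha : a ∈ S
  · simp [glue, ha, hp]
  · simp [glue, cutAt, ha]

lemma glue_injective {S : Finset α} {p p' : S → Option (α × C)} {h h' : α → Option (α × C)}
    (hS : ∀ a ∈ S, h a = none) (hS' : ∀ a ∈ S, h' a = none)
    (heq : glue S p h = glue S p' h') : p = p' ∧ h = h' := by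
  refine ⟨funext fun a => ?_, ?_⟩
  · rw [← glue_apply_coe S p h, ← glue_apply_coe S p' h', heq]
  · rw [← cutAt_glue p hS, ← cutAt_glue p' hS', heq]

lemma parentMap_cutAt_some_of_notMem (S : Finset α) (g : α → Option (α × C)) {a : α}
    (ha : a ∉ S) : parentMap (cutAt S g) (some a) = parentMap g (some a) := by
  simp [cutAt, ha]

/-- `∀ b ∈ o, b ∈ S` says that `o : Option α` is the root or a vertex of `S`. -/
lemma isRootedForest_cutAt_iff (S : Finset α) (g : α → Option (α × C)) :
    IsRootedForest (cutAt S g) ↔ ∀ a, ∃ m, ∀ b ∈ (parentMap g)^[m] (some a), b ∈ S := by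
  suffices ∀ o : Option α, (∃ r, (parentMap (cutAt S g))^[r] o = none) ↔
      ∃ m, ∀ b ∈ (parentMap g)^[m] o, b ∈ S from forall_congr' fun a => this (some a)
  intro o
  constructor
  · rintro ⟨r, hr⟩
    induction r generalizing o with
    | zero => exact ⟨0, by simp_all⟩
    | succ r ih =>
      rcases o with _ | a
      · exact ⟨0, by simp⟩
      by_cases ha : a ∈ S
      · exact ⟨0, by simpa⟩
      rw [iterate_succ_apply, parentMap_cutAt_some_of_notMem S g ha] at hr
      obtain ⟨m, hm⟩ := ih _ hr
      exact ⟨m + 1, hm⟩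
  · rintro ⟨m, hm⟩
    induction m generalizing o with
    | zero =>
      rcases o with _ | a
      · exact ⟨0, rfl⟩
      · exact ⟨1, by simp [cutAt, hm a rfl]⟩
    | succ m ih =>
      rcases o with _ | a
      · exact ⟨0, rfl⟩
      by_cases ha : a ∈ S
      · exact ⟨1, by simp [cutAt, ha]⟩
      obtain ⟨r, hr⟩ := ih _ hm
      exact ⟨r + 1, by rwa [iterate_succ_apply, parentMap_cutAt_some_of_notMem S g ha]⟩

lemma isRootedForest_cutAt {g : α → Option (α × C)} (hg : IsRootedForest g) (S : Finset α) :
    IsRootedForest (cutAt S g) :=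
  (isRootedForest_cutAt_iff S g).2 fun a => (hg a).imp fun _ hm b hb => by simp [hm] at hb

lemma IsRootedForest.of_cutAt {S : Finset α} {g : α → Option (α × C)}
    (hcut : IsRootedForest (cutAt S g))
    (hS : ∀ a ∈ S, ∃ r, (parentMap g)^[r] (some a) = none) : IsRootedForest g := by
  intro a
  obtain ⟨m, hm⟩ := (isRootedForest_cutAt_iff S g).1 hcut a
  rcases hb : (parentMap g)^[m] (some a) with _ | b
  · exact ⟨m, hb⟩
  · obtain ⟨r, hr⟩ := hS b (hm b hb)
    exact ⟨r + m, by rw [iterate_add_apply, hb, hr]⟩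

def ForestRootedOn (S : Finset α) : Type _ :=
  {h : α → Option (α × C) // IsRootedForest h ∧ ∀ a ∈ S, h a = none}

end CutGlue

section CyclicPart

variable {α C : Type*} [Fintype α]

open Classical in
noncomputable def cyclicSet (g : α → Option (α × C)) : Finset α :=
  Finset.univ.filter fun a => some a ∈ periodicPts (parentMap g)

lemma mem_cyclicSet {g : α → Option (α × C)} {a : α} :
    a ∈ cyclicSet g ↔ some a ∈ periodicPts (parentMap g) := by
  simp [cyclicSet]

lemma exists_eq_some_of_mem_cyclicSet {g : α → Option (α × C)} {a : α}
    (ha : a ∈ cyclicSet g) : ∃ b c, g a = some (b, c) ∧ b ∈ cyclicSet g := by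
  rw [mem_cyclicSet] at ha
  have hnext := (bijOn_periodicPts (parentMap g)).mapsTo ha
  rcases hga : g a with _ | ⟨b, c⟩
  · obtain ⟨n, hn, hp⟩ := mem_periodicPts.1 ha
    simpa using eq_none_of_isPeriodicPt hn hp (m := 1) (by simp [hga])
  · exact ⟨b, c, rfl, mem_cyclicSet.2 (by simpa [hga] using hnext)⟩

def permLinks {S : Finset α} (q : Equiv.Perm S × (S → C)) : S → Option (α × C) :=
  fun a => some (q.1 a, q.2 a)

lemma exists_permLinks_of_cyclicSet_eq {S : Finset α} {g : α → Option (α × C)}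
    (hg : cyclicSet g = S) : ∃ q : Equiv.Perm S × (S → C), ∀ a : S, permLinks q a = g a := by
  subst hg
  choose next col hnext hmem using fun a : cyclicSet g => exists_eq_some_of_mem_cyclicSet a.2
  have hinj : Injective fun a => (⟨next a, hmem a⟩ : cyclicSet g) := by
    intro a b hab
    have := (bijOn_periodicPts (parentMap g)).injOn (mem_cyclicSet.1 a.2)
      (mem_cyclicSet.1 b.2) (by simpa [hnext] using congrArg Subtype.val hab)
    exact Subtype.ext (Option.some.inj this)
  exact ⟨(Equiv.ofBijective _ (Finite.injective_iff_bijective.1 hinj), col),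
    fun a => (hnext a).symm⟩

variable [DecidableEq α]

lemma isRootedForest_cutAt_cyclicSet (g : α → Option (α × C)) :
    IsRootedForest (cutAt (cyclicSet g) g) := by
  refine (isRootedForest_cutAt_iff _ g).2 fun a => ?_
  obtain ⟨m, hm⟩ := exists_iterate_mem_periodicPts (parentMap g) (some a)
  exact ⟨m, fun b hb => mem_cyclicSet.2 (Option.mem_def.1 hb ▸ hm)⟩

lemma cyclicSet_glue_permLinks {S : Finset α} (q : Equiv.Perm S × (S → C))
    (h : ForestRootedOn (C := C) S) : cyclicSet (glue S (permLinks q) h.1) = S := by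
  set g := glue S (permLinks q) h.1
  have hstep : ∀ a : S, parentMap g (some a) = some (q.1 a) := fun a => by
    simp [g, glue_apply_coe, permLinks]
  ext a
  rw [mem_cyclicSet]
  constructor
  · intro ha
    have hinv : Set.MapsTo (parentMap g) {o | ∀ b ∈ o, b ∈ S} {o | ∀ b ∈ o, b ∈ S} := by
      rintro (_ | b) hb
      · simp
      · simp [hstep ⟨b, hb b rfl⟩]
    have hcut : IsRootedForest (cutAt S g) := by rw [cutAt_glue _ h.2.2]; exact h.2.1
    obtain ⟨m, hm⟩ := (isRootedForest_cutAt_iff S g).1 hcut a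
    obtain ⟨n, hn, hp⟩ := mem_periodicPts.1 ha
    have hmn : (parentMap g)^[n * m] (some a) ∈ {o | ∀ b ∈ o, b ∈ S} := by
      rw [show n * m = (n * m - m) + m by have := Nat.le_mul_of_pos_left m hn; omega,
        iterate_add_apply]
      exact hinv.iterate _ hm
    rw [(hp.mul_const m).eq] at hmn
    exact hmn a rfl
  · intro ha
    have hsemi : Semiconj (fun x : S => some (x : α)) q.1 (parentMap g) :=
      fun x => (hstep x).symm
    exact hsemi.mapsTo_periodicPts (q.1.injective.mem_periodicPts ⟨a, ha⟩)

noncomputable def cyclicFiberEquiv (S : Finset α) :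
    (Equiv.Perm S × (S → C)) × ForestRootedOn (C := C) S ≃
      {g : α → Option (α × C) // cyclicSet g = S} := by
  refine Equiv.ofBijective (fun x => ⟨glue S (permLinks x.1) x.2.1,
    cyclicSet_glue_permLinks x.1 x.2⟩) ⟨?_, ?_⟩
  · rintro ⟨q, h⟩ ⟨q', h'⟩ heq
    obtain ⟨hp, hh⟩ := glue_injective h.2.2 h'.2.2 (congrArg Subtype.val heq)
    have hq : q = q' := by
      have := fun a => congrFun hp a
      simp only [permLinks, Option.some.injEq, Prod.mk.injEq] at this
      exact Prod.ext (Equiv.ext fun a => Subtype.ext (this a).1) (funext fun a => (this a).2)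
    rw [hq, Subtype.ext hh]
  · rintro ⟨g, hg⟩
    obtain ⟨q, hq⟩ := exists_permLinks_of_cyclicSet_eq hg
    refine ⟨(q, ⟨cutAt S g, hg ▸ isRootedForest_cutAt_cyclicSet g, fun a ha => by
      simp [cutAt, ha]⟩), Subtype.ext (glue_cutAt hq)⟩

end CyclicPart

section Path

variable {α C : Type*}

def descend (f : α → Option (α × C)) (l : Option (α × C)) : Option (α × C) :=
  l.bind fun p => f p.1

lemma map_fst_iterate_descend (f : α → Option (α × C)) (x : Option (α × C)) (m : ℕ) :
    ((descend f)^[m] x).map Prod.fst = (parentMap f)^[m] (x.map Prod.fst) :=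
  Semiconj.iterate_right (fun l => by rcases l with _ | ⟨a, c⟩ <;> rfl) m x

lemma iterate_descend_eq_none_iff {f : α → Option (α × C)} (hf : IsRootedForest f)
    {x : Option (α × C)} {m : ℕ} :
    (descend f)^[m] x = none ↔ depth f (x.map Prod.fst) ≤ m := by
  rw [← Option.map_eq_none_iff (f := Prod.fst), map_fst_iterate_descend,
    iterate_eq_none_iff_depth_le hf]

/-- The path enters `S` at `q.1 0` and runs through `q.1 1, q.1 2, …` down to the root. -/
def pathLink {S : Finset α} (q : (Fin S.card ≃ S) × (Fin S.card → C)) (m : ℕ) :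
    Option (α × C) :=
  if hm : m < S.card then some ((q.1 ⟨m, hm⟩ : α), q.2 ⟨m, hm⟩) else none

def pathLinks {S : Finset α} (q : (Fin S.card ≃ S) × (Fin S.card → C)) : S → Option (α × C) :=
  fun a => pathLink q (q.1.symm a + 1)

variable {S : Finset α}

lemma pathLink_of_lt (q : (Fin S.card ≃ S) × (Fin S.card → C)) {m : ℕ} (hm : m < S.card) :
    pathLink q m = some ((q.1 ⟨m, hm⟩ : α), q.2 ⟨m, hm⟩) :=
  dif_pos hm

lemma pathLink_of_le (q : (Fin S.card ≃ S) × (Fin S.card → C)) {m : ℕ} (hm : S.card ≤ m) :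
    pathLink q m = none :=
  dif_neg (by omega)

lemma pathLinks_apply (q : (Fin S.card ≃ S) × (Fin S.card → C)) (m : Fin S.card) :
    pathLinks q (q.1 m) = pathLink q (m + 1) := by
  simp [pathLinks]

lemma eq_of_pathLink_zero_eq {q q' : (Fin S.card ≃ S) × (Fin S.card → C)}
    (h0 : pathLink q 0 = pathLink q' 0) (hl : pathLinks q = pathLinks q') : q = q' := by
  have key : ∀ m, pathLink q m = pathLink q' m := by
    intro m
    induction m with
    | zero => exact h0
    | succ m ih =>
      by_cases hm : m < S.card
      · rw [pathLink_of_lt q hm, pathLink_of_lt q' hm] at ih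
        have hv : q.1 ⟨m, hm⟩ = q'.1 ⟨m, hm⟩ := by
          simp only [Option.some.injEq, Prod.mk.injEq] at ih; exact Subtype.ext ih.1
        rw [← pathLinks_apply q ⟨m, hm⟩, ← pathLinks_apply q' ⟨m, hm⟩, hl, hv]
      · rw [pathLink_of_le q (by omega), pathLink_of_le q' (by omega)]
  have hm : ∀ m : Fin S.card, q.1 m = q'.1 m ∧ q.2 m = q'.2 m := fun m => by
    have := key m
    simp only [pathLink_of_lt _ m.2, Fin.eta, Option.some.injEq, Prod.mk.injEq] at this
    exact ⟨Subtype.ext this.1, this.2⟩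
  exact Prod.ext (Equiv.ext fun m => (hm m).1) (funext fun m => (hm m).2)

section

variable [DecidableEq α]

lemma iterate_parentMap_glue_pathLinks (q : (Fin S.card ≃ S) × (Fin S.card → C))
    (h : α → Option (α × C)) (m r : ℕ) :
    (parentMap (glue S (pathLinks q) h))^[r] ((pathLink q m).map Prod.fst) =
      (pathLink q (m + r)).map Prod.fst := by
  induction r generalizing m with
  | zero => rfl
  | succ r ih =>
    rw [iterate_succ_apply, show m + (r + 1) = m + 1 + r by omega, ← ih (m + 1)]
    congr 1
    by_cases hm : m < S.card
    · rw [pathLink_of_lt q hm, ← pathLinks_apply q ⟨m, hm⟩]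
      simp [glue_apply_coe]
    · rw [pathLink_of_le q (by omega), pathLink_of_le q (by omega)]
      rfl

lemma isRootedForest_glue_pathLinks (q : (Fin S.card ≃ S) × (Fin S.card → C))
    (h : ForestRootedOn (C := C) S) : IsRootedForest (glue S (pathLinks q) h.1) := by
  refine .of_cutAt (S := S) (by rw [cutAt_glue _ h.2.2]; exact h.2.1) fun a ha => ?_
  refine ⟨S.card, ?_⟩
  have := iterate_parentMap_glue_pathLinks q h.1 (q.1.symm ⟨a, ha⟩) S.card
  rw [pathLink_of_lt q (q.1.symm ⟨a, ha⟩).2, pathLink_of_le q (by omega)] at this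
  simpa using this

end

variable [Fintype α]

open Classical in
noncomputable def pathSet (f : α → Option (α × C)) (x : Option (α × C)) : Finset α :=
  Finset.univ.filter fun a => ∃ r, (parentMap f)^[r] (x.map Prod.fst) = some a

lemma mem_pathSet {f : α → Option (α × C)} {x : Option (α × C)} {a : α} :
    a ∈ pathSet f x ↔ ∃ r, (parentMap f)^[r] (x.map Prod.fst) = some a := by
  simp [pathSet]

lemma exists_pathLinks_of_pathSet_eq {f : α → Option (α × C)} (hf : IsRootedForest f)
    {x : Option (α × C)} (hS : pathSet f x = S) :
    ∃ q : (Fin S.card ≃ S) × (Fin S.card → C), pathLink q 0 = x ∧ ∀ a : S, pathLinks q a = f a := by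
  have htraj := map_fst_iterate_descend f x
  have hsome : ∀ m : Fin (depth f (x.map Prod.fst)), ∃ p, (descend f)^[m] x = some p :=
    fun m => Option.ne_none_iff_exists'.1 fun h => by
      have := (iterate_descend_eq_none_iff hf).1 h; omega
  choose u hu using hsome
  have hmem : ∀ m, (u m).1 ∈ S := fun m => by
    rw [← hS, mem_pathSet]
    exact ⟨m, by rw [← htraj, hu]; rfl⟩
  have hbij : Bijective fun m => (⟨(u m).1, hmem m⟩ : S) := by
    refine ⟨fun m m' hmm' => Fin.ext (iterate_injOn_Iic_depth hf _ (Set.mem_Iic.2 m.2.le)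
      (Set.mem_Iic.2 m'.2.le) ?_), fun a => ?_⟩
    · simp only [← htraj, hu]
      simpa using congrArg Subtype.val hmm'
    · obtain ⟨r, hr⟩ := mem_pathSet.1 (by rw [hS]; exact a.2)
      rw [← htraj] at hr
      have hrd : r < depth f (x.map Prod.fst) := not_le.1 fun h => by
        simp [(iterate_descend_eq_none_iff hf).2 h] at hr
      rw [hu ⟨r, hrd⟩] at hr
      exact ⟨⟨r, hrd⟩, Subtype.ext (by simpa using hr)⟩
  have hd : depth f (x.map Prod.fst) = S.card := by
    simpa using Fintype.card_congr (Equiv.ofBijective _ hbij)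
  set q : (Fin S.card ≃ S) × (Fin S.card → C) :=
    ((finCongr hd.symm).trans (Equiv.ofBijective _ hbij), fun m => (u (finCongr hd.symm m)).2)
  have hq : ∀ m, pathLink q m = (descend f)^[m] x := fun m => by
    by_cases hm : m < S.card
    · have := hu (Fin.cast hd.symm ⟨m, hm⟩)
      rw [Fin.val_cast] at this
      rw [pathLink_of_lt q hm, this]
      rfl
    · rw [pathLink_of_le q (not_lt.1 hm), eq_comm, iterate_descend_eq_none_iff hf]
      omega
  refine ⟨q, hq 0, fun a => ?_⟩
  obtain ⟨m, rfl⟩ := q.1.surjective a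
  rw [pathLinks_apply, hq, iterate_succ_apply', ← hq, pathLink_of_lt q m.2]
  rfl

variable [DecidableEq α]

lemma pathSet_glue_pathLinks (q : (Fin S.card ≃ S) × (Fin S.card → C))
    (h : α → Option (α × C)) : pathSet (glue S (pathLinks q) h) (pathLink q 0) = S := by
  ext a
  simp only [mem_pathSet, iterate_parentMap_glue_pathLinks, Nat.zero_add]
  constructor
  · rintro ⟨r, hr⟩
    by_cases hrS : r < S.card
    · rw [pathLink_of_lt q hrS] at hr
      exact Option.some.inj hr ▸ (q.1 ⟨r, hrS⟩).2
    · simp [pathLink_of_le q (not_lt.1 hrS)] at hr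
  · intro ha
    refine ⟨q.1.symm ⟨a, ha⟩, ?_⟩
    simp [pathLink_of_lt q (q.1.symm ⟨a, ha⟩).2]

noncomputable def pathFiberEquiv (S : Finset α) :
    ((Fin S.card ≃ S) × (Fin S.card → C)) × ForestRootedOn (C := C) S ≃
      {y : {f : α → Option (α × C) // IsRootedForest f} × Option (α × C) //
        pathSet y.1.1 y.2 = S} := by
  refine Equiv.ofBijective (fun x => ⟨(⟨glue S (pathLinks x.1) x.2.1,
    isRootedForest_glue_pathLinks x.1 x.2⟩, pathLink x.1 0),
    pathSet_glue_pathLinks x.1 x.2.1⟩) ⟨?_, ?_⟩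
  · rintro ⟨q, h⟩ ⟨q', h'⟩ heq
    simp only [Subtype.mk.injEq, Prod.mk.injEq] at heq
    obtain ⟨hp, hh⟩ := glue_injective h.2.2 h'.2.2 heq.1
    rw [eq_of_pathLink_zero_eq heq.2 hp, Subtype.ext hh]
  · rintro ⟨⟨⟨f, hf⟩, x⟩, hS⟩
    obtain ⟨q, hx, hq⟩ := exists_pathLinks_of_pathSet_eq hf hS
    refine ⟨(q, ⟨cutAt S f, isRootedForest_cutAt hf S, fun a ha => by simp [cutAt, ha]⟩), ?_⟩
    simp only [Subtype.mk.injEq, Prod.mk.injEq]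
    exact ⟨glue_cutAt hq, hx⟩

end Path

section Count

variable {α C : Type*} [Fintype α]

noncomputable def colouredPermEquivPath (S : Finset α) :
    Equiv.Perm S × (S → C) ≃ (Fin S.card ≃ S) × (Fin S.card → C) :=
  Equiv.prodCongr (Equiv.equivCongr S.equivFin (Equiv.refl S))
    (Equiv.arrowCongr S.equivFin (Equiv.refl C))

noncomputable def mapEquivRootedForestProd [DecidableEq α] :
    (α → Option (α × C)) ≃ {f : α → Option (α × C) // IsRootedForest f} × Option (α × C) :=
  (Equiv.sigmaFiberEquiv cyclicSet).symm.trans <|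
    (Equiv.sigmaCongrRight fun S => (cyclicFiberEquiv S).symm.trans <|
      (Equiv.prodCongr (colouredPermEquivPath S) (Equiv.refl _)).trans (pathFiberEquiv S)).trans
    (Equiv.sigmaFiberEquiv fun y : {f : α → Option (α × C) // IsRootedForest f} × Option (α × C) =>
      pathSet y.1.1 y.2)

theorem card_isRootedForest_mul [Fintype C] :
    Nat.card {f : α → Option (α × C) // IsRootedForest f} *
        (Fintype.card C * Fintype.card α + 1) =
      (Fintype.card C * Fintype.card α + 1) ^ Fintype.card α := by
  have hlink : Nat.card (Option (α × C)) = Fintype.card C * Fintype.card α + 1 := by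
    simp [Nat.mul_comm]
  classical
  rw [← hlink, ← Nat.card_prod, ← Nat.card_congr mapEquivRootedForestProd, Nat.card_fun, hlink]
  simp

end Count

section Geometry

variable {k n : ℕ} {f : Code k n}

lemma acyclic_iff_isRootedForest (f : Code k n) : Acyclic f ↔ IsRootedForest f := by
  constructor
  · rintro ⟨h, hh⟩ a
    induction hd : h a using Nat.strong_induction_on generalizing a with
    | _ d ih =>
    rcases hfa : f a with _ | ⟨b, t⟩
    · exact ⟨1, by simp [hfa]⟩
    · obtain ⟨r, hr⟩ := ih (h b) (hd ▸ hh a b t hfa) b rfl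
      exact ⟨r + 1, by rwa [iterate_succ_apply, parentMap_some, hfa]⟩
  · exact fun hf => ⟨fun a => depth f (some a), fun a b t hab => depth_lt_of_eq_some hf hab⟩

lemma cyc_zero (f : Code k n) (j : Fin n) : cyc k n f j 0 = (anchor k n (n + 1) f j).1 := rfl

lemma cyc_one (f : Code k n) (j : Fin n) : cyc k n f j 1 = (anchor k n (n + 1) f j).2 := by
  simp [cyc, pvert]

lemma cyc_of_two_le (f : Code k n) (j : Fin n) {s : ℕ} (h2 : 2 ≤ s) (hs : s < k) :
    cyc k n f j s = Sum.inr (j, ⟨s - 2, by omega⟩) := by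
  rw [cyc, if_neg (by omega), pvert, dif_pos (by omega)]
  congr 3

lemma cyc_congr {g : Code k n} {j : Fin n}
    (h : anchor k n (n + 1) f j = anchor k n (n + 1) g j) : cyc k n f j = cyc k n g j := by
  funext s
  simp only [cyc, h]

lemma anchor_eq_anchor_of_depth_le (hf : IsRootedForest f) :
    ∀ (fuel fuel' : ℕ) (j : Fin n), depth f (some j) ≤ fuel → depth f (some j) ≤ fuel' →
      anchor k n fuel f j = anchor k n fuel' f j
  | 0, _, j, h, _ | _, 0, j, _, h => absurd h (by have := depth_some_pos hf j; omega)
  | fuel + 1, fuel' + 1, j, h, h' => by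
    rcases hfj : f j with _ | ⟨i, t⟩
    · simp [anchor, hfj]
    · have := depth_lt_of_eq_some hf hfj
      simp only [anchor, hfj, anchor_eq_anchor_of_depth_le hf fuel fuel' i (by omega) (by omega)]

def edge (f : Code k n) (j : Fin n) (s : ℕ) : V k n × V k n :=
  (cyc k n f j s, cyc k n f j ((s + 1) % k))

/-- The sides of a polygon are its edges `1, …, k - 1`; it is glued along its edge `0`. -/
def attachEdge (f : Code k n) : Option (Fin n × Fin (k - 1)) → V k n × V k n
  | none => (Sum.inl 0, Sum.inl 1)
  | some (i, t) => edge f i (t + 1)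

lemma anchor_eq_attachEdge (hf : IsRootedForest f) (j : Fin n) :
    anchor k n (n + 1) f j = attachEdge f (f j) := by
  rcases hfj : f j with _ | ⟨i, t⟩
  · simp [anchor, hfj, attachEdge]
  · have hdi := depth_le_card hf (some i)
    rw [Fintype.card_fin] at hdi
    have hi : anchor k n n f i = anchor k n (n + 1) f i :=
      anchor_eq_anchor_of_depth_le hf n (n + 1) i hdi (by omega)
    simp only [anchor, hfj]
    rw [hi]
    simp only [attachEdge, edge, Prod.mk.injEq]
    refine ⟨by simp [cyc], ?_⟩
    rcases Nat.lt_or_ge (t + 1 + 1) k with ht | ht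
    · rw [Nat.mod_eq_of_lt ht]
      simp [cyc]
    · rw [show t + 1 + 1 = k by omega, Nat.mod_self, cyc_zero, pvert, dif_neg (by omega),
        if_neg (by omega)]

lemma cyc_zero_eq_attachEdge (hf : IsRootedForest f) (j : Fin n) :
    cyc k n f j 0 = (attachEdge f (f j)).1 := by
  rw [cyc_zero, anchor_eq_attachEdge hf]

lemma cyc_one_eq_attachEdge (hf : IsRootedForest f) (j : Fin n) :
    cyc k n f j 1 = (attachEdge f (f j)).2 := by
  rw [cyc_one, anchor_eq_attachEdge hf]

lemma edge_zero (hk : 3 ≤ k) (hf : IsRootedForest f) (j : Fin n) :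
    edge f j 0 = attachEdge f (f j) := by
  rw [edge, Nat.zero_add, Nat.mod_eq_of_lt (by omega), cyc_zero_eq_attachEdge hf,
    cyc_one_eq_attachEdge hf]

lemma mem_polyO_iff {j : Fin n} {e : V k n × V k n} :
    e ∈ polyO k n f j ↔ ∃ s < k, edge f j s = e := by
  simp [polyO, edge, Fin.exists_iff]

lemma attachEdge_mem_polyO (hk : 3 ≤ k) (hf : IsRootedForest f) (j : Fin n) :
    attachEdge f (f j) ∈ polyO k n f j :=
  mem_polyO_iff.2 ⟨0, by omega, edge_zero hk hf j⟩

noncomputable def level (f : Code k n) : V k n → ℕ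
  | Sum.inl _ => 0
  | Sum.inr (i, _) => depth f (some i)

lemma level_attachEdge_lt (hf : IsRootedForest f) (j : Fin n) :
    level f (attachEdge f (f j)).1 < depth f (some j) ∧
      level f (attachEdge f (f j)).2 < depth f (some j) := by
  induction hd : depth f (some j) using Nat.strong_induction_on generalizing j with
  | _ d ih =>
  subst hd
  rcases hfj : f j with _ | ⟨i, t⟩
  · simp [attachEdge, level, depth_some_pos hf j]
  have hij := depth_lt_of_eq_some hf hfj
  have hcyc : ∀ s < k, level f (cyc k n f i s) ≤ depth f (some i) := by
    intro s hs
    obtain ⟨h0, h1⟩ := ih _ hij i rfl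
    match s with
    | 0 => rw [cyc_zero_eq_attachEdge hf]; omega
    | 1 => rw [cyc_one_eq_attachEdge hf]; omega
    | s + 2 => simp [cyc_of_two_le f i (by omega : 2 ≤ s + 2) hs, level]
  simp only [attachEdge, edge]
  have ht := t.2
  exact ⟨(hcyc (t + 1) (by omega)).trans_lt hij, (hcyc _ (Nat.mod_lt _ (by omega))).trans_lt hij⟩

lemma cyc_eq_inr_or_level_lt (hf : IsRootedForest f) (j : Fin n) {s : ℕ} (hs : s < k) :
    (∃ x, cyc k n f j s = Sum.inr (j, x)) ∨ level f (cyc k n f j s) < depth f (some j) := by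
  obtain ⟨h0, h1⟩ := level_attachEdge_lt hf j
  match s with
  | 0 => exact Or.inr (by rwa [cyc_zero_eq_attachEdge hf])
  | 1 => exact Or.inr (by rwa [cyc_one_eq_attachEdge hf])
  | s + 2 => exact Or.inl ⟨_, cyc_of_two_le f j (by omega) hs⟩

lemma eq_of_cyc_eq_of_ne (hf : IsRootedForest f) {j : Fin n}
    (hne : (attachEdge f (f j)).1 ≠ (attachEdge f (f j)).2) {s s' : ℕ} (hs : s < k)
    (hs' : s' < k) (h : cyc k n f j s = cyc k n f j s') : s = s' := by
  wlog hss' : s ≤ s' generalizing s s'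
  · exact (this hs' hs h.symm (by omega)).symm
  obtain ⟨h0, h1⟩ := level_attachEdge_lt hf j
  rcases Nat.lt_or_ge s' 2 with hs'2 | hs'2
  · interval_cases s' <;> interval_cases s <;>
      simp_all [cyc_zero_eq_attachEdge hf, cyc_one_eq_attachEdge hf]
  rw [cyc_of_two_le f j hs'2 hs'] at h
  rcases Nat.lt_or_ge s 2 with hs2 | hs2
  · interval_cases s
    · rw [cyc_zero_eq_attachEdge hf] at h; rw [h] at h0; simp [level] at h0
    · rw [cyc_one_eq_attachEdge hf] at h; rw [h] at h1; simp [level] at h1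
  · rw [cyc_of_two_le f j hs2 hs] at h
    simp only [Sum.inr.injEq, Prod.mk.injEq, Fin.mk.injEq, true_and] at h
    omega

lemma attachEdge_fst_ne_snd (hk : 3 ≤ k) (hf : IsRootedForest f) (j : Fin n) :
    (attachEdge f (f j)).1 ≠ (attachEdge f (f j)).2 := by
  induction hd : depth f (some j) using Nat.strong_induction_on generalizing j with
  | _ d ih =>
  subst hd
  rcases hfj : f j with _ | ⟨i, t⟩
  · simp [attachEdge]
  intro h
  simp only [attachEdge, edge] at h
  have := eq_of_cyc_eq_of_ne hf (ih _ (depth_lt_of_eq_some hf hfj) i rfl) (by omega)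
    (Nat.mod_lt _ (by omega)) h
  rcases Nat.lt_or_ge (t + 1 + 1) k with ht | ht
  · rw [Nat.mod_eq_of_lt ht] at this; omega
  · rw [show t + 1 + 1 = k by omega, Nat.mod_self] at this; omega

lemma eq_of_cyc_eq (hk : 3 ≤ k) (hf : IsRootedForest f) (j : Fin n) {s s' : ℕ} (hs : s < k)
    (hs' : s' < k) (h : cyc k n f j s = cyc k n f j s') : s = s' :=
  eq_of_cyc_eq_of_ne hf (attachEdge_fst_ne_snd hk hf j) hs hs' h

lemma exists_inr_edge_of_one_le (hk : 3 ≤ k) (f : Code k n) (j : Fin n) {s : ℕ} (hs1 : 1 ≤ s)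
    (hs : s < k) : ∃ x, (edge f j s).1 = Sum.inr (j, x) ∨ (edge f j s).2 = Sum.inr (j, x) := by
  rcases Nat.lt_or_ge s 2 with hs2 | hs2
  · obtain rfl : s = 1 := by omega
    refine ⟨⟨0, by omega⟩, Or.inr ?_⟩
    rw [edge, Nat.mod_eq_of_lt (by omega)]
    exact cyc_of_two_le f j le_rfl (by omega)
  · exact ⟨_, Or.inl (cyc_of_two_le f j hs2 hs)⟩

/-- The side contains an inner vertex of `i`; on the cycle of `j ≠ i` such a vertex has level
below `depth j`. -/
lemma depth_lt_of_edge_eq (hk : 3 ≤ k) (hf : IsRootedForest f) {i j : Fin n} (hij : i ≠ j)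
    {s s' : ℕ} (hs1 : 1 ≤ s) (hs : s < k) (hs' : s' < k) (h : edge f i s = edge f j s') :
    depth f (some i) < depth f (some j) := by
  obtain ⟨x, hx⟩ := exists_inr_edge_of_one_le hk f i hs1 hs
  rw [h] at hx
  have key : ∀ s'' < k, cyc k n f j s'' = Sum.inr (i, x) → depth f (some i) < depth f (some j) := by
    intro s'' hs'' he
    rcases cyc_eq_inr_or_level_lt hf j hs'' with ⟨x', hx'⟩ | hlt
    · simp [he] at hx'; exact absurd hx'.1 hij
    · simpa [he, level] using hlt
  rcases hx with hx | hx
  exacts [key s' hs' hx, key _ (Nat.mod_lt _ (by omega)) hx]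

lemma eq_of_edge_eq (hk : 3 ≤ k) (hf : IsRootedForest f) {i j : Fin n} {s s' : ℕ} (hs1 : 1 ≤ s)
    (hs : s < k) (hs1' : 1 ≤ s') (hs' : s' < k) (h : edge f i s = edge f j s') :
    i = j ∧ s = s' := by
  obtain rfl : i = j := by
    by_contra hij
    have := depth_lt_of_edge_eq hk hf hij hs1 hs hs' h
    have := depth_lt_of_edge_eq hk hf (Ne.symm hij) hs1' hs' hs h.symm
    omega
  exact ⟨rfl, eq_of_cyc_eq hk hf i hs hs' (congrArg Prod.fst h)⟩

lemma attachEdge_ne_edge (hk : 3 ≤ k) (f : Code k n) (j : Fin n) {s : ℕ} (hs1 : 1 ≤ s)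
    (hs : s < k) : attachEdge f none ≠ edge f j s := by
  obtain ⟨x, hx⟩ := exists_inr_edge_of_one_le hk f j hs1 hs
  intro h
  rw [← h] at hx
  simp [attachEdge] at hx

lemma attachEdge_injective (hk : 3 ≤ k) (hf : IsRootedForest f) : Injective (attachEdge f) := by
  rintro (_ | ⟨i, t⟩) (_ | ⟨i', t'⟩) h
  · rfl
  · exact absurd h (attachEdge_ne_edge hk f i' (by omega) (by omega))
  · exact absurd h.symm (attachEdge_ne_edge hk f i (by omega) (by omega))
  · obtain ⟨rfl, htt'⟩ := eq_of_edge_eq hk hf (by omega) (by omega) (by omega) (by omega) h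
    rw [Fin.ext (by omega : (t : ℕ) = t')]

lemma eq_of_attachEdge_mem_polyO (hk : 3 ≤ k) (hf : IsRootedForest f) {j : Fin n}
    {o : Option (Fin n × Fin (k - 1))} (ho : ∀ t, o ≠ some (j, t))
    (h : attachEdge f o ∈ polyO k n f j) : f j = o := by
  obtain ⟨s, hs, he⟩ := mem_polyO_iff.1 h
  rcases Nat.eq_zero_or_pos s with rfl | hs1
  · exact attachEdge_injective hk hf (by rw [← edge_zero hk hf, he])
  rcases o with _ | ⟨i, t⟩
  · exact absurd he.symm (attachEdge_ne_edge hk f j hs1 hs)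
  · obtain ⟨rfl, -⟩ := eq_of_edge_eq hk hf (by omega) (by omega) hs1 hs he.symm
    exact absurd rfl (ho t)

/-- Each vertex has a unique successor on the cycle. -/
lemma apply_cyc_eq_self (hk : 3 ≤ k) (hf : IsRootedForest f) {j : Fin n} {φ : V k n ≃ V k n}
    (hpoly : polyO k n f j = (polyO k n f j).image (Prod.map φ φ))
    (h0 : φ (cyc k n f j 0) = cyc k n f j 0) {s : ℕ} (hs : s < k) :
    φ (cyc k n f j s) = cyc k n f j s := by
  induction s with
  | zero => exact h0
  | succ s ih =>
    have hmem : Prod.map φ φ (edge f j s) ∈ polyO k n f j := by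
      rw [hpoly]
      exact Finset.mem_image_of_mem _ (mem_polyO_iff.2 ⟨s, by omega, rfl⟩)
    obtain ⟨s', hs', he⟩ := mem_polyO_iff.1 hmem
    simp only [edge, Prod.map_apply, Prod.mk.injEq, ih (by omega)] at he
    obtain rfl := eq_of_cyc_eq hk hf j hs' (by omega) he.1
    rw [Nat.mod_eq_of_lt hs] at he
    exact he.2.symm

lemma eq_and_apply_cyc_eq_self_of_attachEdge (hk : 3 ≤ k) {g : Code k n} (hf : IsRootedForest f)
    (hg : IsRootedForest g) {j : Fin n} {φ : V k n ≃ V k n}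
    (hpoly : polyO k n g j = (polyO k n f j).image (Prod.map φ φ))
    (hoj : ∀ t, g j ≠ some (j, t)) (hfg : attachEdge f (g j) = attachEdge g (g j))
    (hfix : Prod.map φ φ (attachEdge g (g j)) = attachEdge g (g j)) :
    f j = g j ∧ cyc k n f j = cyc k n g j ∧ ∀ s < k, φ (cyc k n g j s) = cyc k n g j s := by
  have hmem : attachEdge f (g j) ∈ polyO k n f j := by
    obtain ⟨e, he, hφe⟩ := Finset.mem_image.1 (hpoly ▸ attachEdge_mem_polyO hk hg j)
    rwa [hfg, ← (φ.injective.prodMap φ.injective) (hφe.trans hfix.symm)]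
  have hfj := eq_of_attachEdge_mem_polyO hk hf hoj hmem
  have hcyc : cyc k n f j = cyc k n g j :=
    cyc_congr (by rw [anchor_eq_attachEdge hf, anchor_eq_attachEdge hg, hfj, hfg])
  have hpoly' : polyO k n f j = polyO k n g j := by simp only [polyO, hcyc]
  rw [hpoly'] at hpoly
  refine ⟨hfj, hcyc, fun s hs => apply_cyc_eq_self hk hg hpoly ?_ hs⟩
  rw [cyc_zero_eq_attachEdge hg]
  exact congrArg Prod.fst hfix

/-- Induction on the depth in `g`: once `φ` fixes the parent's cycle, the edge `j` is glued to in
`g` is an edge of `j` in `f` as well, and that edge determines `f j`. -/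
theorem eq_of_relRootLab (hk : 3 ≤ k) {f g : Enc k n} (h : RelRootLab k n f g) : f = g := by
  obtain ⟨φ, h0, h1, hpoly⟩ := h
  have hf := (acyclic_iff_isRootedForest f.1).1 f.2
  have hg := (acyclic_iff_isRootedForest g.1).1 g.2
  suffices key : ∀ j, f.1 j = g.1 j ∧ cyc k n f.1 j = cyc k n g.1 j ∧
      ∀ s < k, φ (cyc k n g.1 j s) = cyc k n g.1 j s from
    Subtype.ext (funext fun j => (key j).1)
  intro j
  induction hd : depth g.1 (some j) using Nat.strong_induction_on generalizing j with
  | _ d ih =>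
  subst hd
  have hstep : attachEdge f.1 (g.1 j) = attachEdge g.1 (g.1 j) ∧
      Prod.map φ φ (attachEdge g.1 (g.1 j)) = attachEdge g.1 (g.1 j) := by
    rcases hgj : g.1 j with _ | ⟨i, t⟩
    · simp [attachEdge, h0, h1]
    · obtain ⟨-, hcyc, hfix⟩ := ih _ (depth_lt_of_eq_some hg hgj) i rfl
      have ht := t.2
      simp only [attachEdge, edge, hcyc, Prod.map_apply, hfix _ (Nat.mod_lt _ (by omega)),
        hfix (t + 1) (by omega), and_self]
  exact eq_and_apply_cyc_eq_self_of_attachEdge hk hf hg (hpoly j)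
    (fun t hj => by have := depth_lt_of_eq_some hg hj; omega) hstep.1 hstep.2

end Geometry

lemma card_quot_of_forall_rel_imp_eq {α : Type*} {r : α → α → Prop}
    (h : ∀ a b, r a b → a = b) : Nat.card (Quot r) = Nat.card α :=
  Nat.card_congr
    { toFun := Quot.lift id h
      invFun := Quot.mk r
      left_inv := Quot.ind fun _ => rfl
      right_inv := fun _ => rfl }

lemma eq_pow_pred_of_mul_eq_pow {N m n : ℕ} (hm : 0 < m) (h : N * m = m ^ n) :
    N = m ^ (n - 1) := by
  rcases n with _ | n
  · simpa using Nat.eq_one_of_mul_eq_one_right h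
  · rw [pow_succ] at h
    exact Nat.eq_of_mul_eq_mul_right hm h

/-- The number of labelled oriented-edge-rooted `k`-gonal 2-trees
with `n` polygons is `((k-1)n + 1)^(n-1)`. -/
theorem labelled_oriented_edge_rooted_count (k : ℕ) (hk : 3 ≤ k) (n : ℕ) :
    aRootLab k n = ((k - 1) * n + 1) ^ (n - 1) := by
  have hcount := card_isRootedForest_mul (α := Fin n) (C := Fin (k - 1))
  rw [Fintype.card_fin, Fintype.card_fin,
    ← Nat.card_congr (Equiv.subtypeEquivRight acyclic_iff_isRootedForest)] at hcount
  rw [aRootLab, card_quot_of_forall_rel_imp_eq fun _ _ => eq_of_relRootLab hk]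
  exact eq_pow_pred_of_mul_eq_pow (Nat.succ_pos _) hcount

end KGonal2Trees
end

section
/- If B(x) = Σ_{n≥0} b_n x^n is the formal power series satisfying B(x) = exp(Σ_{i≥1} x^i B(x^i)^{k-1} / i), then the coefficients satisfy b_0 = 1 and n·b_n = Σ_{1≤j≤n} Σ_α (|α|+1) b_{α_1}···b_{α_{k-1}} b_{n-j}, where the inner sum runs over (k-1)-tuples α = (α_1,...,α_{k-1}) of nonnegative integers such that |α|+1 divides j, and |α| = α_1+···+α_{k-1}. -/
namespace KGonal2Trees

open PowerSeries

/-- Composition of a power series `F` with `x^d`, i.e. the series `F(x^d)`. -/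
noncomputable def compXPow (d : ℕ) (F : PowerSeries ℚ) : PowerSeries ℚ :=
  PowerSeries.mk fun n => if d ∣ n then PowerSeries.coeff (R := ℚ) (n / d) F else 0

/-- Exponential `exp(S)` of a power series `S` with zero constant term:
`exp(S) = Σ_{m ≥ 0} S^m / m!` (the coefficient of `x^n` only involves `m ≤ n`). -/
noncomputable def expS (S : PowerSeries ℚ) : PowerSeries ℚ :=
  PowerSeries.mk fun n =>
    ∑ m ∈ Finset.range (n + 1), PowerSeries.coeff (R := ℚ) n (S ^ m) / (m.factorial : ℚ)

/-- The series `Σ_{i ≥ 1} x^i B(x^i)^(k-1) / i` (the `i`-th term has order `≥ i`, so the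
coefficient of `x^n` only involves `1 ≤ i ≤ n`). -/
noncomputable def seqB (k : ℕ) (B : PowerSeries ℚ) : PowerSeries ℚ :=
  PowerSeries.mk fun n =>
    ∑ i ∈ Finset.Icc 1 n,
      PowerSeries.coeff (R := ℚ) n (PowerSeries.X ^ i * compXPow i B ^ (k - 1)) / (i : ℚ)

/-! Since `expS S` is Mathlib's `exp` with `S` substituted, the chain rule gives `B' = B S'` for
`S = seqB k B`, i.e. `n b_n = Σ_j (j s_j) b_{n-j}`. Putting `C = x B^(k-1)`, the series `S` is
`Σ_i C(x^i) / i`, so `j s_j = Σ_{d ∣ j} d c_d`; finally `c_d` is the sum of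
`b_{α_1} ⋯ b_{α_{k-1}}` over the tuples with `|α| + 1 = d`. -/

open Finset

section General

variable {R : Type*} [CommSemiring R]

lemma coeff_X_mul_derivative (F : PowerSeries R) (n : ℕ) :
    coeff n (X * d⁄dX R F) = n * coeff n F := by
  cases n with
  | zero => simp
  | succ n => rw [coeff_succ_X_mul, coeff_derivative, mul_comm, Nat.cast_succ]

lemma natCast_mul_coeff_of_derivative_eq_mul {F S : PowerSeries R}
    (h : d⁄dX R F = F * d⁄dX R S) (n : ℕ) :
    (n : R) * coeff n F = ∑ j ∈ Icc 1 n, (j * coeff j S) * coeff (n - j) F := by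
  have hθ : X * d⁄dX R F = (X * d⁄dX R S) * F := by rw [h]; ring
  rw [← coeff_X_mul_derivative, hθ, coeff_mul, Nat.sum_antidiagonal_eq_sum_range_succ
    (fun a b => coeff a (X * d⁄dX R S) * coeff b F), range_eq_Ico,
    sum_eq_sum_Ico_succ_bot n.succ_pos, ← Ico_add_one_right_eq_Icc]
  simp [coeff_X_mul_derivative]

lemma coeff_pow_eq_zero_of_lt {S : PowerSeries R} (hS : constantCoeff S = 0) {m n : ℕ}
    (h : n < m) : coeff n (S ^ m) = 0 :=
  coeff_of_lt_order n ((Nat.cast_lt.mpr h).trans_le (le_order_pow_of_constantCoeff_eq_zero m hS))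

lemma coeff_pow_eq_sum_piAntidiag (K n : ℕ) (F : PowerSeries R) :
    coeff n (F ^ K) = ∑ α ∈ piAntidiag (univ : Finset (Fin K)) n, ∏ i, coeff (α i) F := by
  rw [← Fin.prod_const, coeff_prod, finsuppAntidiag, sum_map, ← sum_attach (piAntidiag _ _)]
  rfl

lemma sum_piFinset_filter_dvd_eq_sum_divisors (K : ℕ) (F : PowerSeries R) {j : ℕ} (hj : j ≠ 0) :
    ∑ α ∈ (Fintype.piFinset fun _ : Fin K => range (j + 1)).filter
        (fun α => (∑ i, α i) + 1 ∣ j),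
      (((∑ i, α i) + 1 : ℕ) : R) * ∏ i, coeff (α i) F =
      ∑ d ∈ j.divisors, (d : R) * coeff d (X * F ^ K) := by
  have hmaps : ∀ α ∈ (Fintype.piFinset fun _ : Fin K => range (j + 1)).filter
      (fun α => (∑ i, α i) + 1 ∣ j), (∑ i, α i) + 1 ∈ j.divisors :=
    fun α hα => Nat.mem_divisors.mpr ⟨(mem_filter.mp hα).2, hj⟩
  rw [← sum_fiberwise_of_maps_to hmaps]
  refine sum_congr rfl fun d hd => ?_
  obtain ⟨m, rfl⟩ : ∃ m, d = m + 1 := ⟨d - 1, by have := Nat.pos_of_mem_divisors hd; omega⟩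
  have hmj : m < j + 1 := by have := Nat.divisor_le hd; omega
  rw [coeff_succ_X_mul, coeff_pow_eq_sum_piAntidiag, mul_sum]
  refine sum_congr ?_ fun α hα => by rw [(mem_piAntidiag.mp hα).1]
  ext α
  simp only [mem_filter, Fintype.mem_piFinset, mem_range, mem_piAntidiag, Nat.add_right_cancel_iff,
    mem_univ, implies_true, and_true]
  refine ⟨fun h => h.2, fun h => ⟨⟨fun i => ?_, h ▸ Nat.dvd_of_mem_divisors hd⟩, h⟩⟩
  exact (single_le_sum (fun _ _ => Nat.zero_le _) (mem_univ i)).trans_lt (h ▸ hmj)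

end General

lemma coeff_zero_expS (S : PowerSeries ℚ) : coeff 0 (expS S) = 1 := by
  simp [expS]

lemma expS_eq_subst_exp {S : PowerSeries ℚ} (hS : constantCoeff S = 0) :
    expS S = (exp ℚ).subst S := by
  ext n
  rw [expS, coeff_mk, coeff_subst' (HasSubst.of_constantCoeff_zero' hS),
    finsum_eq_sum_of_support_subset (s := range (n + 1))]
  · refine sum_congr rfl fun m _ => ?_
    simp [coeff_exp, div_eq_inv_mul]
  · refine fun m hm => mem_range.mpr (not_le.mp fun hnm => hm ?_)
    dsimp only
    rw [coeff_pow_eq_zero_of_lt hS (Nat.lt_of_succ_le hnm), smul_zero]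

lemma derivative_expS {S : PowerSeries ℚ} (hS : constantCoeff S = 0) :
    d⁄dX ℚ (expS S) = expS S * d⁄dX ℚ S := by
  rw [expS_eq_subst_exp hS, derivative_subst (HasSubst.of_constantCoeff_zero' hS), derivative_exp]

lemma compXPow_eq_expand {d : ℕ} (hd : d ≠ 0) (F : PowerSeries ℚ) :
    compXPow d F = expand d hd F := by
  ext n
  rw [compXPow, coeff_mk, coeff_expand]

lemma coeff_X_pow_mul_compXPow_pow {i : ℕ} (hi : i ≠ 0) (k : ℕ) (B : PowerSeries ℚ) (j : ℕ) :
    coeff j (X ^ i * compXPow i B ^ k) = if i ∣ j then coeff (j / i) (X * B ^ k) else 0 := by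
  rw [compXPow_eq_expand hi, ← expand_X i hi, ← map_pow, ← map_mul, coeff_expand]

lemma constantCoeff_seqB (k : ℕ) (B : PowerSeries ℚ) : constantCoeff (seqB k B) = 0 := by
  rw [← coeff_zero_eq_constantCoeff_apply, seqB, coeff_mk]
  simp

lemma natCast_mul_coeff_seqB (k : ℕ) (B : PowerSeries ℚ) (j : ℕ) :
    (j : ℚ) * coeff j (seqB k B) = ∑ d ∈ j.divisors, (d : ℚ) * coeff d (X * B ^ (k - 1)) := by
  have hterm : ∀ i ∈ Icc 1 j, (j : ℚ) * (coeff j (X ^ i * compXPow i B ^ (k - 1)) / i) =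
      if i ∣ j then ((j / i : ℕ) : ℚ) * coeff (j / i) (X * B ^ (k - 1)) else 0 := by
    intro i hi
    have hi0 : i ≠ 0 := Nat.one_le_iff_ne_zero.mp (mem_Icc.mp hi).1
    rw [coeff_X_pow_mul_compXPow_pow hi0]
    split_ifs with hij
    · rw [Nat.cast_div hij (Nat.cast_ne_zero.mpr hi0)]
      ring
    · simp
  rw [seqB, coeff_mk, mul_sum, sum_congr rfl hterm, ← sum_filter, ← Nat.sum_div_divisors,
    Nat.divisors, Ico_add_one_right_eq_Icc]

theorem coeff_recurrence_general (k : ℕ) (B : PowerSeries ℚ)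
    (hB : B = expS (seqB k B)) :
    PowerSeries.coeff (R := ℚ) 0 B = 1 ∧
    ∀ n : ℕ, 1 ≤ n →
      (n : ℚ) * PowerSeries.coeff (R := ℚ) n B =
        ∑ j ∈ Finset.Icc 1 n,
          ∑ α ∈ (Fintype.piFinset fun _ : Fin (k - 1) => Finset.range (j + 1)).filter
              (fun α => (∑ i, α i) + 1 ∣ j),
            (((∑ i, α i) + 1 : ℕ) : ℚ) * (∏ i, PowerSeries.coeff (R := ℚ) (α i) B) *
              PowerSeries.coeff (R := ℚ) (n - j) B := by
  have hderiv : d⁄dX ℚ B = B * d⁄dX ℚ (seqB k B) := by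
    simpa only [← hB] using derivative_expS (constantCoeff_seqB k B)
  refine ⟨hB ▸ coeff_zero_expS _, fun n _ => ?_⟩
  rw [natCast_mul_coeff_of_derivative_eq_mul hderiv]
  refine sum_congr rfl fun j hj => ?_
  rw [natCast_mul_coeff_seqB,
    ← sum_piFinset_filter_dvd_eq_sum_divisors _ _ (Nat.one_le_iff_ne_zero.mp (mem_Icc.mp hj).1),
    sum_mul]

/-- If `B(x) = Σ b_n x^n` satisfies
`B(x) = exp(Σ_{i≥1} x^i B(x^i)^(k-1) / i)`, then `b_0 = 1` and
`n b_n = Σ_{1≤j≤n} Σ_α (|α|+1) b_{α_1} ⋯ b_{α_{k-1}} b_{n-j}`, the inner sum running over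
`(k-1)`-tuples `α` of nonnegative integers with `|α| + 1 ∣ j`. -/
theorem coeff_recurrence (k : ℕ) (hk : 2 ≤ k) (B : PowerSeries ℚ)
    (hB : B = expS (seqB k B)) :
    PowerSeries.coeff (R := ℚ) 0 B = 1 ∧
    ∀ n : ℕ, 1 ≤ n →
      (n : ℚ) * PowerSeries.coeff (R := ℚ) n B =
        ∑ j ∈ Finset.Icc 1 n,
          ∑ α ∈ (Fintype.piFinset fun _ : Fin (k - 1) => Finset.range (j + 1)).filter
              (fun α => (∑ i, α i) + 1 ∣ j),
            (((∑ i, α i) + 1 : ℕ) : ℚ) * (∏ i, PowerSeries.coeff (R := ℚ) (α i) B) *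
              PowerSeries.coeff (R := ℚ) (n - j) B :=
  coeff_recurrence_general k B hB

end KGonal2Trees
end
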